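/- arXiv:2401.01048 — 5 statements merged into one kernel-verified Lean document; each statement's English description precedes it below -/
import Mathlib

section
/- (Two-level change of measure for multi-view learning) Let V ≥ 1 and for each view v let P_v, Q_v be probability measures on a hypothesis space H_v with Q_v ≪ P_v, and let π, ρ be probability measures on the set of views {1,…,V} with ρ ≪ π. For any measurable φ with suitable integrability, E_{v∼ρ} E_{h∼Q_v}[φ(v,h)] ≤ E_{v∼ρ}[KL(Q_v ‖ P_v)] + KL(ρ ‖ π) + ln( E_{v∼π} E_{h∼P_v}[e^{φ(v,h)}] ). -/
/-!
Both levels are instances of the Donsker–Varadhan inequality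
`∫ f dμ ≤ KL(μ ‖ ν) + log ∫ exp f dν`, which is Gibbs' inequality `KL(μ ‖ ν_f) ≥ 0` for the
Gibbs measure `dν_f ∝ exp f dν`. Applied to each view it bounds `E_{Q_v}[φ v]` by
`KL(Q_v ‖ P_v) + log A_v` with `A_v = E_{P_v}[exp (φ v)]`; averaging over `ρ` and applying the
finite form of the same inequality to the weights `ρ, π` and the values `A_v` gives the claim.
-/

open MeasureTheory

open Real in
theorem integral_le_integral_llr_add_log_integral_exp {α : Type*} [MeasurableSpace α]
    {μ ν : Measure α} [IsProbabilityMeasure μ] [SigmaFinite ν] (hμν : μ ≪ ν) {f : α → ℝ}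
    (hfμ : Integrable f μ) (hfν : Integrable (fun x ↦ exp (f x)) ν)
    (h_int : Integrable (llr μ ν) μ) :
    ∫ x, f x ∂μ ≤ ∫ x, llr μ ν x ∂μ + log (∫ x, exp (f x) ∂ν) := by
  have : NeZero ν :=
    ⟨fun hν ↦ IsProbabilityMeasure.ne_zero μ (Measure.absolutelyContinuous_zero_iff.mp (hν ▸ hμν))⟩
  have : IsProbabilityMeasure (ν.tilted f) := isProbabilityMeasure_tilted hfν
  have hμν' : μ ≪ ν.tilted f := hμν.trans (absolutelyContinuous_tilted hfν)
  have gibbs := InformationTheory.integral_llr_add_sub_measure_univ_nonneg hμν'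
    (integrable_llr_tilted_right hμν hfμ h_int hfν)
  rw [integral_llr_tilted_right hμν hfμ hfν h_int] at gibbs
  simp only [probReal_univ, add_sub_cancel_right] at gibbs
  linarith

open Real in
theorem sum_mul_log_le_sum_mul_log_div_add_log_sum_mul {ι : Type*} [Fintype ι]
    (p q A : ι → ℝ) (hp : ∀ i, 0 ≤ p i) (hq : ∀ i, 0 ≤ q i) (hq1 : ∑ i, q i = 1)
    (hqp : ∀ i, p i = 0 → q i = 0) (hA : ∀ i, 0 < A i) :
    ∑ i, q i * log (A i) ≤ ∑ i, q i * log (q i / p i) + log (∑ i, p i * A i) := by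
  set Z := ∑ i, p i * A i
  have hZ : 0 < Z := by
    obtain ⟨i, -, hqi⟩ := Finset.exists_ne_zero_of_sum_ne_zero (hq1.trans_ne one_ne_zero)
    have hpi : 0 < p i := (hp i).lt_of_ne fun h ↦ hqi (hqp i h.symm)
    exact (mul_pos hpi (hA i)).trans_le
      (Finset.single_le_sum (fun j _ ↦ mul_nonneg (hp j) (hA j).le) (Finset.mem_univ i))
  -- `log x ≤ x - 1` termwise; the right-hand sides sum to `Z / Z - 1 = 0`.
  have term : ∀ i, q i * (log (A i) - log (q i / p i) - log Z) ≤ p i * A i / Z - q i := by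
    intro i
    rcases (hq i).eq_or_lt with h | h
    · rw [← h, zero_mul, sub_zero]
      exact div_nonneg (mul_nonneg (hp i) (hA i).le) hZ.le
    have hpi : 0 < p i := (hp i).lt_of_ne fun h' ↦ h.ne' (hqp i h'.symm)
    have hAi := hA i
    calc q i * (log (A i) - log (q i / p i) - log Z)
        = q i * log (p i * A i / (q i * Z)) := by
          rw [log_div h.ne' hpi.ne', log_div (by positivity) (by positivity),
            log_mul hpi.ne' hAi.ne', log_mul h.ne' hZ.ne']
          ring
      _ ≤ q i * (p i * A i / (q i * Z) - 1) :=
          mul_le_mul_of_nonneg_left (log_le_sub_one_of_pos (by positivity)) h.le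
      _ = p i * A i / Z - q i := by field_simp
  have hsum := Finset.sum_le_sum fun i (_ : i ∈ Finset.univ) ↦ term i
  simp only [mul_sub, Finset.sum_sub_distrib, ← Finset.sum_mul, ← Finset.sum_div, hq1] at hsum
  have hZZ : Z / Z = 1 := div_self hZ.ne'
  linarith

theorem two_level_change_of_measure_general {H : Type*} [MeasurableSpace H]
    (V : ℕ)
    (π ρ : Fin V → ℝ) (hπ0 : ∀ v, 0 ≤ π v) (hρ0 : ∀ v, 0 ≤ ρ v)
    (hρ1 : ∑ v, ρ v = 1)
    (hacρ : ∀ v, π v = 0 → ρ v = 0)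
    (P Q : Fin V → Measure H)
    [∀ v, IsProbabilityMeasure (P v)] [∀ v, IsProbabilityMeasure (Q v)]
    (hac : ∀ v, Q v ≪ P v)
    (φ : Fin V → H → ℝ)
    (hexp : ∀ v, Integrable (fun h => Real.exp (φ v h)) (P v))
    (hφint : ∀ v, Integrable (φ v) (Q v))
    (hkl : ∀ v, Integrable (fun h => Real.log (((Q v).rnDeriv (P v) h).toReal)) (Q v)) :
    ∑ v, ρ v * ∫ h, φ v h ∂(Q v)
      ≤ (∑ v, ρ v * ∫ h, Real.log (((Q v).rnDeriv (P v) h).toReal) ∂(Q v))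
        + (∑ v, ρ v * Real.log (ρ v / π v))
        + Real.log (∑ v, π v * ∫ h, Real.exp (φ v h) ∂(P v)) := by
  have per_view (v : Fin V) :
      ∫ h, φ v h ∂(Q v) ≤ ∫ h, llr (Q v) (P v) h ∂(Q v) + Real.log (∫ h, Real.exp (φ v h) ∂(P v)) :=
    integral_le_integral_llr_add_log_integral_exp (hac v) (hφint v) (hexp v) (hkl v)
  have across_views := sum_mul_log_le_sum_mul_log_div_add_log_sum_mul π ρ
    (fun v ↦ ∫ h, Real.exp (φ v h) ∂(P v)) hπ0 hρ0 hρ1 hacρ fun v ↦ integral_exp_pos (hexp v)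
  calc ∑ v, ρ v * ∫ h, φ v h ∂(Q v)
      ≤ ∑ v, ρ v * (∫ h, llr (Q v) (P v) h ∂(Q v)
          + Real.log (∫ h, Real.exp (φ v h) ∂(P v))) :=
        Finset.sum_le_sum fun v _ ↦ mul_le_mul_of_nonneg_left (per_view v) (hρ0 v)
    _ = (∑ v, ρ v * ∫ h, llr (Q v) (P v) h ∂(Q v))
          + ∑ v, ρ v * Real.log (∫ h, Real.exp (φ v h) ∂(P v)) := by
        simp only [mul_add, Finset.sum_add_distrib]
    _ ≤ _ := by unfold llr; linarith

/-- Two-level change of measure inequality for multi-view learning: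
views are `{1,…,V}` (encoded as `Fin V`), with hyper-prior `π`, hyper-posterior `ρ`
(probability vectors on the views), per-view priors `P v`, posteriors `Q v`
on the hypothesis space `H`. Then
`E_{v∼ρ} E_{h∼Q v}[φ v h] ≤ E_{v∼ρ}[KL(Q v‖P v)] + KL(ρ‖π) + ln(E_{v∼π} E_{h∼P v}[e^{φ v h}])`. -/
theorem two_level_change_of_measure {H : Type*} [MeasurableSpace H]
    (V : ℕ) (hV : 1 ≤ V)
    (π ρ : Fin V → ℝ) (hπ0 : ∀ v, 0 ≤ π v) (hρ0 : ∀ v, 0 ≤ ρ v)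
    (hπ1 : ∑ v, π v = 1) (hρ1 : ∑ v, ρ v = 1)
    (hacρ : ∀ v, π v = 0 → ρ v = 0)
    (P Q : Fin V → Measure H)
    [∀ v, IsProbabilityMeasure (P v)] [∀ v, IsProbabilityMeasure (Q v)]
    (hac : ∀ v, Q v ≪ P v)
    (φ : Fin V → H → ℝ) (hφ : ∀ v, Measurable (φ v))
    (hexp : ∀ v, Integrable (fun h => Real.exp (φ v h)) (P v))
    (hφint : ∀ v, Integrable (φ v) (Q v))
    (hkl : ∀ v, Integrable (fun h => Real.log (((Q v).rnDeriv (P v) h).toReal)) (Q v)) :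
    ∑ v, ρ v * ∫ h, φ v h ∂(Q v)
      ≤ (∑ v, ρ v * ∫ h, Real.log (((Q v).rnDeriv (P v) h).toReal) ∂(Q v))
        + (∑ v, ρ v * Real.log (ρ v / π v))
        + Real.log (∑ v, π v * ∫ h, Real.exp (φ v h) ∂(P v)) :=
  two_level_change_of_measure_general V π ρ hπ0 hρ0 hρ1 hacρ P Q hac φ hexp hφint hkl
end

section
/- (Gibbs risk decomposition) For any distribution Q on X × {−1,1} and any distribution 𝒬 on a hypothesis class H of functions X → {−1,1}, the Gibbs risk decomposes as R_Q(G_𝒬) = (1/2)·d_{Q_X}(𝒬) + e_Q(𝒬), where R_Q(G_𝒬) = E_{h∼𝒬} E_{(x,y)∼Q}[1[h(x)≠y]], d_{Q_X}(𝒬) = E_{(h,h')∼𝒬²} E_{x∼Q_X}[1[h(x)≠h'(x)]] is the expected disagreement, and e_Q(𝒬) = E_{(h,h')∼𝒬²} E_{(x,y)∼Q}[1[h(x)≠y]·1[h'(x)≠y]] is the expected joint error. -/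
/-!
For binary labels, `1[a ≠ y] + 1[b ≠ y] = 1[a ≠ b] + 2 · 1[a ≠ y] · 1[b ≠ y]`: two predictions
that both miss `y` agree, as there are only two labels, and otherwise `a ≠ b` exactly when one
of them misses `y`. Integrating this identity over `(x, y) ∼ Q` for a fixed pair `(h, h')`, and
then over `(h, h') ∼ 𝒬²`, gives twice the Gibbs risk on the left, since both marginals of `𝒬²`
are `𝒬`.
-/

open MeasureTheory

def zeroOneLoss (a b : Bool) : ℝ := if a = b then 0 else 1

lemma zeroOneLoss_add_zeroOneLoss (a b y : Bool) :
    zeroOneLoss a y + zeroOneLoss b y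
      = zeroOneLoss a b + 2 * (zeroOneLoss a y * zeroOneLoss b y) := by
  cases a <;> cases b <;> cases y <;> norm_num [zeroOneLoss]

lemma norm_zeroOneLoss_le_one (a b : Bool) : ‖zeroOneLoss a b‖ ≤ 1 := by
  unfold zeroOneLoss
  split <;> simp

section Integrability

variable {α : Type*} [MeasurableSpace α] {g k : α → Bool}

lemma Measurable.zeroOneLoss (hg : Measurable g) (hk : Measurable k) :
    Measurable fun a => zeroOneLoss (g a) (k a) :=
  (measurable_of_countable fun q : Bool × Bool => _root_.zeroOneLoss q.1 q.2).comp (hg.prodMk hk)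

lemma integrable_zeroOneLoss (μ : Measure α) [IsFiniteMeasure μ]
    (hg : Measurable g) (hk : Measurable k) :
    Integrable (fun a => zeroOneLoss (g a) (k a)) μ :=
  .of_bound (hg.zeroOneLoss hk).aestronglyMeasurable 1
    (ae_of_all _ fun _ => norm_zeroOneLoss_le_one _ _)

lemma integrable_zeroOneLoss_mul_zeroOneLoss (μ : Measure α) [IsFiniteMeasure μ]
    {g' k' : α → Bool} (hg : Measurable g) (hk : Measurable k)
    (hg' : Measurable g') (hk' : Measurable k') :
    Integrable (fun a => zeroOneLoss (g a) (k a) * zeroOneLoss (g' a) (k' a)) μ :=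
  (integrable_zeroOneLoss μ hg' hk').bdd_mul (hg.zeroOneLoss hk).aestronglyMeasurable
    (ae_of_all _ fun _ => norm_zeroOneLoss_le_one _ _)

end Integrability

theorem risk_add_risk_eq_disagreement_add_two_mul_jointError {X : Type*} [MeasurableSpace X]
    (Q : Measure (X × Bool)) [IsFiniteMeasure Q] {g₁ g₂ : X → Bool}
    (hg₁ : Measurable g₁) (hg₂ : Measurable g₂) :
    ∫ p, zeroOneLoss (g₁ p.1) p.2 ∂Q + ∫ p, zeroOneLoss (g₂ p.1) p.2 ∂Q
      = ∫ x, zeroOneLoss (g₁ x) (g₂ x) ∂(Q.map Prod.fst)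
        + 2 * ∫ p, zeroOneLoss (g₁ p.1) p.2 * zeroOneLoss (g₂ p.1) p.2 ∂Q := by
  have h₁ : Measurable fun p : X × Bool => g₁ p.1 := hg₁.comp measurable_fst
  have h₂ : Measurable fun p : X × Bool => g₂ p.1 := hg₂.comp measurable_fst
  rw [integral_map measurable_fst.aemeasurable (hg₁.zeroOneLoss hg₂).aestronglyMeasurable,
    ← integral_const_mul,
    ← integral_add (integrable_zeroOneLoss Q h₁ measurable_snd)
      (integrable_zeroOneLoss Q h₂ measurable_snd),
    ← integral_add (integrable_zeroOneLoss Q h₁ h₂)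
      ((integrable_zeroOneLoss_mul_zeroOneLoss Q h₁ measurable_snd h₂ measurable_snd).const_mul 2)]
  exact integral_congr_ae (ae_of_all _ fun p => zeroOneLoss_add_zeroOneLoss _ _ _)

/-- The labels `{-1, 1}` are encoded by `Bool`, and `f h x` is the prediction of `h` on `x`. -/
theorem gibbs_risk_decomposition {X H : Type*} [MeasurableSpace X] [MeasurableSpace H]
    (Q : Measure (X × Bool)) [IsProbabilityMeasure Q]
    (𝒬 : Measure H) [IsProbabilityMeasure 𝒬]
    (f : H → X → Bool)
    (hf : Measurable fun p : H × X => f p.1 p.2) :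
    (∫ h, ∫ p, (if f h p.1 = p.2 then (0 : ℝ) else 1) ∂Q ∂𝒬)
      = (1 / 2) * (∫ hh, ∫ x, (if f hh.1 x = f hh.2 x then (0 : ℝ) else 1)
            ∂(Q.map Prod.fst) ∂(𝒬.prod 𝒬))
        + ∫ hh, ∫ p, (if f hh.1 p.1 = p.2 then (0 : ℝ) else 1)
            * (if f hh.2 p.1 = p.2 then (0 : ℝ) else 1) ∂Q ∂(𝒬.prod 𝒬) := by
  set R : H → ℝ := fun h => ∫ p, zeroOneLoss (f h p.1) p.2 ∂Q
  set D : H × H → ℝ := fun hh => ∫ x, zeroOneLoss (f hh.1 x) (f hh.2 x) ∂(Q.map Prod.fst)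
  set E : H × H → ℝ := fun hh =>
    ∫ p, zeroOneLoss (f hh.1 p.1) p.2 * zeroOneLoss (f hh.2 p.1) p.2 ∂Q
  change ∫ h, R h ∂𝒬 = 1 / 2 * ∫ hh, D hh ∂(𝒬.prod 𝒬) + ∫ hh, E hh ∂(𝒬.prod 𝒬)
  have hR : Integrable R 𝒬 :=
    (integrable_zeroOneLoss (𝒬.prod Q) (hf.comp (measurable_fst.prodMk measurable_snd.fst))
      measurable_snd.snd).integral_prod_left
  have hf₁ : Measurable fun q : (H × H) × X => f q.1.1 q.2 :=
    hf.comp (measurable_fst.fst.prodMk measurable_snd)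
  have hf₂ : Measurable fun q : (H × H) × X => f q.1.2 q.2 :=
    hf.comp (measurable_fst.snd.prodMk measurable_snd)
  have hD : Integrable D (𝒬.prod 𝒬) :=
    (integrable_zeroOneLoss ((𝒬.prod 𝒬).prod (Q.map Prod.fst)) hf₁ hf₂).integral_prod_left
  have hE : Integrable E (𝒬.prod 𝒬) :=
    (integrable_zeroOneLoss_mul_zeroOneLoss ((𝒬.prod 𝒬).prod Q)
      (hf₁.comp (measurable_fst.prodMk measurable_snd.fst)) measurable_snd.snd
      (hf₂.comp (measurable_fst.prodMk measurable_snd.fst)) measurable_snd.snd).integral_prod_left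
  have hpair : ∀ hh : H × H, R hh.1 + R hh.2 = D hh + 2 * E hh := fun hh =>
    risk_add_risk_eq_disagreement_add_two_mul_jointError Q
      (hf.comp measurable_prodMk_left) (hf.comp measurable_prodMk_left)
  have hsum : ∫ h, R h ∂𝒬 + ∫ h, R h ∂𝒬
      = ∫ hh, D hh ∂(𝒬.prod 𝒬) + 2 * ∫ hh, E hh ∂(𝒬.prod 𝒬) :=
    calc ∫ h, R h ∂𝒬 + ∫ h, R h ∂𝒬
        = ∫ hh, (R hh.1 + R hh.2) ∂(𝒬.prod 𝒬) := by
          rw [integral_add (hR.comp_fst 𝒬) (hR.comp_snd 𝒬), integral_fun_fst, integral_fun_snd]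
          simp
      _ = ∫ hh, (D hh + 2 * E hh) ∂(𝒬.prod 𝒬) := integral_congr_ae (ae_of_all _ hpair)
      _ = _ := by rw [integral_add hD (hE.const_mul 2), integral_const_mul]
  linarith
end

section
/- (Multi-view domain adaptation bound) For any distributions Q (source) and P (target) on X × {−1,1}, any family of view-specific hypothesis sets H_v and posterior distributions Q_v on H_v for v = 1,…,V, and any hyper-posterior ρ on the views, the target Gibbs risk satisfies R_P(G^MV_ρ) ≤ R_Q(G^MV_ρ) + (1/2)·dis^MV_ρ(Q_X, P_X) + λ_ρ, where dis^MV_ρ(Q_X,P_X) = |d^MV_{P_X}(ρ) − d^MV_{Q_X}(ρ)| is the multi-view domain disagreement and λ_ρ = |e^MV_P(ρ) − e^MV_Q(ρ)| is the deviation of expected joint errors. -/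
/-!
For labels `a b y : Bool` we have `1[a ≠ y] + 1[b ≠ y] = 1[a ≠ b] + 2 · 1[a ≠ y] · 1[b ≠ y]`.
Average this over a pair of views `w ∼ ρ ⊗ ρ`, a pair of hypotheses `hh ∼ Q_{w.1} ⊗ Q_{w.2}` and
an example `(x, y) ∼ μ`. Each error term on the left depends on only one view and one hypothesis,
so it averages to the Gibbs risk. Hence `R_μ = d_μ / 2 + e_μ` for every distribution `μ`.
Subtract this identity for `Q` from the one for `P` and bound the two differences by their
absolute values.
-/

open MeasureTheory ProbabilityTheory

lemma ite_ne_add_ite_ne_eq (a b y : Bool) :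
    (if a = y then (0 : ℝ) else 1) + (if b = y then (0 : ℝ) else 1)
      = (if a = b then (0 : ℝ) else 1)
        + 2 * ((if a = y then (0 : ℝ) else 1) * (if b = y then (0 : ℝ) else 1)) := by
  cases a <;> cases b <;> cases y <;> norm_num

section

variable {α : Type*} [MeasurableSpace α] {μ : Measure α}

lemma measurable_ite_eq {a b : α → Bool} (ha : Measurable a) (hb : Measurable b) :
    Measurable fun x => if a x = b x then (0 : ℝ) else 1 :=
  Measurable.ite (measurableSet_eq_fun ha hb) measurable_const measurable_const

lemma integrable_of_abs_le_one [IsFiniteMeasure μ] {g : α → ℝ} (hg : Measurable g)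
    (hg_le : ∀ x, |g x| ≤ 1) : Integrable g μ :=
  .of_bound hg.aestronglyMeasurable 1 (ae_of_all _ hg_le)

lemma integrable_ite_eq [IsFiniteMeasure μ] {a b : α → Bool} (ha : Measurable a)
    (hb : Measurable b) : Integrable (fun x => if a x = b x then (0 : ℝ) else 1) μ :=
  integrable_of_abs_le_one (measurable_ite_eq ha hb) fun x => by split_ifs <;> simp

end

lemma integral_prod_compProd {α β γ E : Type*} [MeasurableSpace α] [MeasurableSpace β]
    [MeasurableSpace γ] [NormedAddCommGroup E] [NormedSpace ℝ E]
    {μ : Measure α} [SFinite μ] {κ : Kernel α β} [IsSFiniteKernel κ] {ν : Measure γ} [SFinite ν]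
    {F : (α × β) × γ → E} (hF : Integrable F ((μ ⊗ₘ κ).prod ν)) :
    ∫ t, F t ∂((μ ⊗ₘ κ).prod ν) = ∫ a, ∫ b, ∫ c, F ((a, b), c) ∂ν ∂κ a ∂μ := by
  rw [integral_prod _ hF, Measure.integral_compProd hF.integral_prod_left]

section

variable {V H E : Type*} [MeasurableSpace V] [MeasurableSpace H]
  [NormedAddCommGroup E] [NormedSpace ℝ E] (ρ π : Measure V) (κ η : V → Measure H) (g : V → H → E)

lemma integral_prod_integral_prod_fst [SFinite ρ] [IsProbabilityMeasure π] [∀ v, SFinite (κ v)]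
    [∀ v, IsProbabilityMeasure (η v)] :
    ∫ w, ∫ hh, g w.1 hh.1 ∂((κ w.1).prod (η w.2)) ∂(ρ.prod π) = ∫ v, ∫ h, g v h ∂(κ v) ∂ρ := by
  have inner (w : V × V) :
      ∫ hh, g w.1 hh.1 ∂((κ w.1).prod (η w.2)) = ∫ h, g w.1 h ∂(κ w.1) := by
    rw [integral_fun_fst (g w.1), probReal_univ, one_smul]
  simp_rw [inner]
  rw [integral_fun_fst (fun v => ∫ h, g v h ∂(κ v)), probReal_univ, one_smul]

lemma integral_prod_integral_prod_snd [IsProbabilityMeasure ρ] [SFinite π]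
    [∀ v, IsProbabilityMeasure (κ v)] [∀ v, SFinite (η v)] :
    ∫ w, ∫ hh, g w.2 hh.2 ∂((κ w.1).prod (η w.2)) ∂(ρ.prod π) = ∫ v, ∫ h, g v h ∂(η v) ∂π := by
  have inner (w : V × V) :
      ∫ hh, g w.2 hh.2 ∂((κ w.1).prod (η w.2)) = ∫ h, g w.2 h ∂(η w.2) := by
    rw [integral_fun_snd (g w.2), probReal_univ, one_smul]
  simp_rw [inner]
  rw [integral_fun_snd (fun v => ∫ h, g v h ∂(η v)), probReal_univ, one_smul]

end

section

variable {V H X : Type*} [MeasurableSpace V] [MeasurableSpace H] [MeasurableSpace X]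

noncomputable def gibbsRisk (ρ : Measure V) (κ : V → Measure H) (f : V → H → X → Bool)
    (μ : Measure (X × Bool)) : ℝ :=
  ∫ v, ∫ h, ∫ p, (if f v h p.1 = p.2 then (0 : ℝ) else 1) ∂μ ∂(κ v) ∂ρ

noncomputable def expectedDisagreement (ρ : Measure V) (κ : V → Measure H)
    (f : V → H → X → Bool) (μX : Measure X) : ℝ :=
  ∫ w, ∫ hh, ∫ x, (if f w.1 hh.1 x = f w.2 hh.2 x then (0 : ℝ) else 1)
    ∂μX ∂((κ w.1).prod (κ w.2)) ∂(ρ.prod ρ)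

noncomputable def expectedJointError (ρ : Measure V) (κ : V → Measure H)
    (f : V → H → X → Bool) (μ : Measure (X × Bool)) : ℝ :=
  ∫ w, ∫ hh, ∫ p, (if f w.1 hh.1 p.1 = p.2 then (0 : ℝ) else 1)
    * (if f w.2 hh.2 p.1 = p.2 then (0 : ℝ) else 1) ∂μ ∂((κ w.1).prod (κ w.2)) ∂(ρ.prod ρ)

lemma measurable_comp_of_measurable_uncurry {α : Type*} [MeasurableSpace α]
    {f : V → H → X → Bool} (hf : Measurable fun t : (V × H) × X => f t.1.1 t.1.2 t.2)
    {a : α → V} {b : α → H} {c : α → X} (ha : Measurable a) (hb : Measurable b)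
    (hc : Measurable c) :
    Measurable fun t => f (a t) (b t) (c t) :=
  hf.comp ((ha.prodMk hb).prodMk hc)

lemma expectedDisagreement_map_fst (ρ : Measure V) (κ : V → Measure H) {f : V → H → X → Bool}
    (hf : Measurable fun t : (V × H) × X => f t.1.1 t.1.2 t.2) (μ : Measure (X × Bool)) :
    expectedDisagreement ρ κ f (μ.map Prod.fst)
      = ∫ w, ∫ hh, ∫ p, (if f w.1 hh.1 p.1 = f w.2 hh.2 p.1 then (0 : ℝ) else 1)
          ∂μ ∂((κ w.1).prod (κ w.2)) ∂(ρ.prod ρ) := by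
  refine integral_congr_ae (ae_of_all _ fun w => integral_congr_ae (ae_of_all _ fun hh => ?_))
  have hpred (v : V) (h : H) : Measurable (f v h) :=
    measurable_comp_of_measurable_uncurry hf measurable_const measurable_const measurable_id
  exact integral_map measurable_fst.aemeasurable
    (measurable_ite_eq (hpred _ _) (hpred _ _)).aestronglyMeasurable

theorem gibbsRisk_eq_half_expectedDisagreement_add_expectedJointError
    (ρ : Measure V) [IsProbabilityMeasure ρ]
    (κ : V → Measure H) [∀ v, IsProbabilityMeasure (κ v)] (hκ : Measurable κ)
    {f : V → H → X → Bool} (hf : Measurable fun t : (V × H) × X => f t.1.1 t.1.2 t.2)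
    (μ : Measure (X × Bool)) [IsProbabilityMeasure μ] :
    gibbsRisk ρ κ f μ
      = 1 / 2 * expectedDisagreement ρ κ f (μ.map Prod.fst) + expectedJointError ρ κ f μ := by
  let K : Kernel V H := ⟨κ, hκ⟩
  have : IsMarkovKernel K := ⟨fun v => inferInstanceAs (IsProbabilityMeasure (κ v))⟩
  -- All three quantities are integrals against this one measure on
  -- (pair of views, pair of hypotheses, example), so the pointwise identity integrates at once.
  let M := ((ρ.prod ρ) ⊗ₘ (K ∥ₖ K)).prod μ
  have integral_M_eq_iterated {F : ((V × V) × (H × H)) × (X × Bool) → ℝ}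
      (hF : Integrable F M) :
      ∫ t, F t ∂M = ∫ w, ∫ hh, ∫ p, F ((w, hh), p) ∂μ ∂((κ w.1).prod (κ w.2)) ∂(ρ.prod ρ) := by
    rw [integral_prod_compProd hF]
    simp only [Kernel.parallelComp_apply, K, Kernel.coe_mk]
  have hpred₁ : Measurable fun t : ((V × V) × (H × H)) × (X × Bool) => f t.1.1.1 t.1.2.1 t.2.1 :=
    measurable_comp_of_measurable_uncurry hf (by fun_prop) (by fun_prop) (by fun_prop)
  have hpred₂ : Measurable fun t : ((V × V) × (H × H)) × (X × Bool) => f t.1.1.2 t.1.2.2 t.2.1 :=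
    measurable_comp_of_measurable_uncurry hf (by fun_prop) (by fun_prop) (by fun_prop)
  have hlabel : Measurable fun t : ((V × V) × (H × H)) × (X × Bool) => t.2.2 := by fun_prop
  let err₁ := fun t : ((V × V) × (H × H)) × (X × Bool) =>
    if f t.1.1.1 t.1.2.1 t.2.1 = t.2.2 then (0 : ℝ) else 1
  let err₂ := fun t : ((V × V) × (H × H)) × (X × Bool) =>
    if f t.1.1.2 t.1.2.2 t.2.1 = t.2.2 then (0 : ℝ) else 1
  have ierr₁ : Integrable err₁ M := integrable_ite_eq hpred₁ hlabel
  have ierr₂ : Integrable err₂ M := integrable_ite_eq hpred₂ hlabel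
  have idis := integrable_ite_eq (μ := M) hpred₁ hpred₂
  have ijoint : Integrable (fun t => err₁ t * err₂ t) M :=
    integrable_of_abs_le_one ((measurable_ite_eq hpred₁ hlabel).mul
      (measurable_ite_eq hpred₂ hlabel)) fun t => by simp only [err₁, err₂]; split_ifs <;> simp
  have hrisk₁ : gibbsRisk ρ κ f μ = ∫ t, err₁ t ∂M := by
    rw [integral_M_eq_iterated ierr₁]
    exact (integral_prod_integral_prod_fst ρ ρ κ κ fun v h => ∫ p, _ ∂μ).symm
  have hrisk₂ : gibbsRisk ρ κ f μ = ∫ t, err₂ t ∂M := by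
    rw [integral_M_eq_iterated ierr₂]
    exact (integral_prod_integral_prod_snd ρ ρ κ κ fun v h => ∫ p, _ ∂μ).symm
  have hsum := integral_congr_ae (μ := M) (ae_of_all _ fun t =>
    ite_ne_add_ite_ne_eq (f t.1.1.1 t.1.2.1 t.2.1) (f t.1.1.2 t.1.2.2 t.2.1) t.2.2)
  rw [integral_add ierr₁ ierr₂, integral_add idis (ijoint.const_mul 2), integral_const_mul]
    at hsum
  rw [expectedDisagreement_map_fst ρ κ hf, expectedJointError, ← integral_M_eq_iterated idis,
    ← integral_M_eq_iterated ijoint]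
  linarith

theorem gibbsRisk_le_gibbsRisk_add_half_abs_sub_add_abs_sub
    (ρ : Measure V) [IsProbabilityMeasure ρ]
    (κ : V → Measure H) [∀ v, IsProbabilityMeasure (κ v)] (hκ : Measurable κ)
    {f : V → H → X → Bool} (hf : Measurable fun t : (V × H) × X => f t.1.1 t.1.2 t.2)
    (Q P : Measure (X × Bool)) [IsProbabilityMeasure Q] [IsProbabilityMeasure P] :
    gibbsRisk ρ κ f P ≤ gibbsRisk ρ κ f Q
      + 1 / 2 * |expectedDisagreement ρ κ f (P.map Prod.fst)
          - expectedDisagreement ρ κ f (Q.map Prod.fst)|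
      + |expectedJointError ρ κ f P - expectedJointError ρ κ f Q| := by
  rw [gibbsRisk_eq_half_expectedDisagreement_add_expectedJointError ρ κ hκ hf P,
    gibbsRisk_eq_half_expectedDisagreement_add_expectedJointError ρ κ hκ hf Q]
  linarith [le_abs_self (expectedDisagreement ρ κ f (P.map Prod.fst)
      - expectedDisagreement ρ κ f (Q.map Prod.fst)),
    le_abs_self (expectedJointError ρ κ f P - expectedJointError ρ κ f Q)]

end

/-- Multi-view domain adaptation bound:
`R_P(G^MV_ρ) ≤ R_Q(G^MV_ρ) + (1/2)·dis^MV_ρ(Q_X, P_X) + λ_ρ`.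
`V` is the space of views with hyper-posterior `ρ`, `Qv v` the posterior on the
hypothesis space for view `v`, `f v h x` the (binary, `Bool`-valued) prediction of
hypothesis `h` of view `v` on the view-specific part of input `x`, and `Q`, `P`
the source and target distributions on `X × Bool` with marginals `Q.map Prod.fst`
and `P.map Prod.fst`. -/
theorem multiview_da_bound {V H X : Type*}
    [MeasurableSpace V] [MeasurableSpace H] [MeasurableSpace X]
    (ρ : Measure V) [IsProbabilityMeasure ρ]
    (Qv : V → Measure H) [∀ v, IsProbabilityMeasure (Qv v)]
    (Q P : Measure (X × Bool)) [IsProbabilityMeasure Q] [IsProbabilityMeasure P]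
    (f : V → H → X → Bool)
    (hf : Measurable fun t : (V × H) × X => f t.1.1 t.1.2 t.2)
    (hker : Measurable Qv) :
    (∫ v, ∫ h, ∫ p, (if f v h p.1 = p.2 then (0 : ℝ) else 1) ∂P ∂(Qv v) ∂ρ)
      ≤ (∫ v, ∫ h, ∫ p, (if f v h p.1 = p.2 then (0 : ℝ) else 1) ∂Q ∂(Qv v) ∂ρ)
        + (1 / 2) *
          |(∫ w, ∫ hh, ∫ x, (if f w.1 hh.1 x = f w.2 hh.2 x then (0 : ℝ) else 1)
                ∂(P.map Prod.fst) ∂((Qv w.1).prod (Qv w.2)) ∂(ρ.prod ρ))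
           - (∫ w, ∫ hh, ∫ x, (if f w.1 hh.1 x = f w.2 hh.2 x then (0 : ℝ) else 1)
                ∂(Q.map Prod.fst) ∂((Qv w.1).prod (Qv w.2)) ∂(ρ.prod ρ))|
        + |(∫ w, ∫ hh, ∫ p, (if f w.1 hh.1 p.1 = p.2 then (0 : ℝ) else 1)
                * (if f w.2 hh.2 p.1 = p.2 then (0 : ℝ) else 1)
                ∂P ∂((Qv w.1).prod (Qv w.2)) ∂(ρ.prod ρ))
           - (∫ w, ∫ hh, ∫ p, (if f w.1 hh.1 p.1 = p.2 then (0 : ℝ) else 1)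
                * (if f w.2 hh.2 p.1 = p.2 then (0 : ℝ) else 1)
                ∂Q ∂((Qv w.1).prod (Qv w.2)) ∂(ρ.prod ρ))| :=
  gibbsRisk_le_gibbsRisk_add_half_abs_sub_add_abs_sub ρ Qv hker hf Q P
end

section
/- (Maurer's comparison lemma) Let X = (X₁,…,X_m) be i.i.d. random variables with values in [0,1] and mean μ, and let X' = (X'₁,…,X'_m) be i.i.d. Bernoulli random variables with mean μ. Then for any convex function f : [0,1]^m → ℝ, E[f(X)] ≤ E[f(X')]. -/
/-!
In one variable, convexity of `φ` on `[0,1]` gives the chord bound `φ t ≤ (1 - t) φ 0 + t φ 1`,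
and integrating it against a law on `[0,1]` with mean `p` bounds `∫ φ` by
`(1 - p) φ 0 + p φ 1`, which is the integral of `φ` against Bernoulli(`p`).
For `m` coordinates, Fubini writes the integral as an integral over the first coordinate `t` of
`F t = ∫ f (t, y) dy`, integrated over the other coordinates `y`: `F` still satisfies the chord
bound, and `F 0`, `F 1` are integrals of convex functions of the remaining coordinates, to which
induction applies. Extending `f` by zero off the cube makes it bounded and measurable on all of
`ℝᵐ` without changing either integral.
-/

open MeasureTheory Set

noncomputable def bernoulliMeasure (p : ℝ) : Measure ℝ :=
  ENNReal.ofReal p • Measure.dirac 1 + ENNReal.ofReal (1 - p) • Measure.dirac 0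

instance isFiniteMeasure_bernoulliMeasure (p : ℝ) : IsFiniteMeasure (bernoulliMeasure p) := by
  constructor
  simp [bernoulliMeasure, ENNReal.add_lt_top]

theorem integral_bernoulliMeasure {p : ℝ} (hp₀ : 0 ≤ p) (hp₁ : p ≤ 1) (φ : ℝ → ℝ) :
    ∫ x, φ x ∂bernoulliMeasure p = (1 - p) * φ 0 + p * φ 1 := by
  rw [bernoulliMeasure, integral_add_measure, integral_smul_measure, integral_smul_measure,
    integral_dirac, integral_dirac, ENNReal.toReal_ofReal hp₀,
    ENNReal.toReal_ofReal (sub_nonneg.2 hp₁), smul_eq_mul, smul_eq_mul, add_comm]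
  · exact (integrable_dirac enorm_lt_top).smul_measure ENNReal.ofReal_ne_top
  · exact (integrable_dirac enorm_lt_top).smul_measure ENNReal.ofReal_ne_top

theorem integral_id_mem_Icc {μ : Measure ℝ} [IsProbabilityMeasure μ]
    (hμ : ∀ᵐ x ∂μ, x ∈ Icc (0 : ℝ) 1) : ∫ x, x ∂μ ∈ Icc (0 : ℝ) 1 :=
  ⟨integral_nonneg_of_ae (hμ.mono fun _ hx ↦ hx.1),
    by simpa using
      integral_mono_of_nonneg (hμ.mono fun _ hx ↦ hx.1) (integrable_const 1)
        (hμ.mono fun _ hx ↦ hx.2)⟩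

theorem integrable_id_of_ae_mem_Icc {μ : Measure ℝ} [IsFiniteMeasure μ]
    (hμ : ∀ᵐ x ∂μ, x ∈ Icc (0 : ℝ) 1) : Integrable (fun x ↦ x) μ :=
  .of_bound aestronglyMeasurable_id 1 <| hμ.mono fun x hx ↦ by
    rw [Real.norm_eq_abs, abs_le]; constructor <;> linarith [hx.1, hx.2]

theorem integral_le_of_le_chord {μ : Measure ℝ} [IsProbabilityMeasure μ]
    (hμ : ∀ᵐ x ∂μ, x ∈ Icc (0 : ℝ) 1) {φ : ℝ → ℝ} (hφ : Integrable φ μ)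
    (hchord : ∀ t ∈ Icc (0 : ℝ) 1, φ t ≤ (1 - t) * φ 0 + t * φ 1) :
    ∫ x, φ x ∂μ ≤ (1 - ∫ x, x ∂μ) * φ 0 + (∫ x, x ∂μ) * φ 1 := by
  have hid := integrable_id_of_ae_mem_Icc hμ
  calc ∫ x, φ x ∂μ ≤ ∫ t, (φ 0 + t * (φ 1 - φ 0)) ∂μ :=
        integral_mono_ae hφ ((integrable_const _).add (hid.mul_const _)) <|
          hμ.mono fun t ht ↦ by linarith [hchord t ht]
    _ = (1 - ∫ x, x ∂μ) * φ 0 + (∫ x, x ∂μ) * φ 1 := by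
        rw [integral_add (integrable_const _) (hid.mul_const _), integral_mul_const,
          integral_const, probReal_univ, one_smul]
        ring

theorem ae_mem_Icc_pi {ι : Type*} [Fintype ι] {μ : ι → Measure ℝ} [∀ i, SigmaFinite (μ i)]
    {a b : ι → ℝ} (hμ : ∀ i, ∀ᵐ x ∂μ i, x ∈ Icc (a i) (b i)) :
    ∀ᵐ x ∂Measure.pi μ, x ∈ Icc a b :=
  (Filter.Eventually.filter_mono Measure.ae_pi_le_pi (Filter.eventually_pi hμ)).mono fun _ hx ↦
    ⟨fun i ↦ (hx i).1, fun i ↦ (hx i).2⟩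

theorem ae_mem_Icc_bernoulliMeasure (p : ℝ) : ∀ᵐ x ∂bernoulliMeasure p, x ∈ Icc (0 : ℝ) 1 := by
  rw [ae_iff]
  simp [bernoulliMeasure]

theorem integral_pi_fin_succ {α E : Type*} [MeasurableSpace α] [NormedAddCommGroup E]
    [NormedSpace ℝ E] {n : ℕ} (μ : Fin (n + 1) → Measure α) [∀ i, SigmaFinite (μ i)]
    (g : (Fin (n + 1) → α) → E) :
    ∫ x, g x ∂Measure.pi μ
      = ∫ z, g (Fin.cons z.1 z.2) ∂(μ 0).prod (Measure.pi fun j ↦ μ j.succ) := by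
  rw [← (measurePreserving_piFinSuccAbove μ 0).symm.integral_comp' g]
  simp only [MeasurableEquiv.piFinSuccAbove_symm_apply, Fin.insertNthEquiv, Equiv.coe_fn_mk,
    Fin.insertNth_zero]
  rfl

theorem Fin.cons_mem_Icc_iff {n : ℕ} {α : Type*} [Preorder α] {a b : Fin (n + 1) → α} {x : α}
    {y : Fin n → α} :
    (Fin.cons x y : Fin (n + 1) → α) ∈ Icc a b ↔
      x ∈ Icc (a 0) (b 0) ∧ y ∈ Icc (Fin.tail a) (Fin.tail b) := by
  simp only [mem_Icc, Fin.le_cons, Fin.cons_le]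
  tauto

theorem ConvexOn.comp_fin_cons {n : ℕ} {g : (Fin (n + 1) → ℝ) → ℝ}
    (hg : ConvexOn ℝ (Icc 0 1) g) :
    ConvexOn ℝ (Icc (0 : ℝ) 1 ×ˢ Icc (0 : Fin n → ℝ) 1) fun z ↦ g (Fin.cons z.1 z.2) := by
  let L := (Fin.consLinearEquiv ℝ fun _ : Fin (n + 1) ↦ ℝ).toLinearMap
  have hpre : L ⁻¹' Icc 0 1 = Icc (0 : ℝ) 1 ×ˢ Icc (0 : Fin n → ℝ) 1 :=
    ext fun _ ↦ Fin.cons_mem_Icc_iff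
  have key := hg.comp_linearMap L
  rw [hpre] at key
  exact key

theorem ConvexOn.comp_prodMk_right {𝕜 E F β : Type*} [Semiring 𝕜] [PartialOrder 𝕜]
    [AddCommMonoid E] [AddCommMonoid F] [AddCommMonoid β] [PartialOrder β] [Module 𝕜 E]
    [Module 𝕜 F] [SMul 𝕜 β] {s : Set E} {t : Set F} {f : E × F → β}
    (hf : ConvexOn 𝕜 (s ×ˢ t) f) {x : E} (hx : x ∈ s) : ConvexOn 𝕜 t fun y ↦ f (x, y) := by
  refine ⟨fun y hy z hz a b ha hb hab ↦
    (hf.1 (mk_mem_prod hx hy) (mk_mem_prod hx hz) ha hb hab).2, fun y hy z hz a b ha hb hab ↦ ?_⟩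
  have key := hf.2 (mk_mem_prod hx hy) (mk_mem_prod hx hz) ha hb hab
  rwa [Prod.smul_mk, Prod.smul_mk, Prod.mk_add_mk, Convex.combo_self hab] at key

theorem ConvexOn.le_chord_fst {F : Type*} [AddCommGroup F] [Module ℝ F] {t : Set F}
    {f : ℝ × F → ℝ} (hf : ConvexOn ℝ (Icc 0 1 ×ˢ t) f) {y : F} (hy : y ∈ t) {x : ℝ}
    (hx : x ∈ Icc (0 : ℝ) 1) :
    f (x, y) ≤ (1 - x) * f (0, y) + x * f (1, y) := by
  have key := hf.2 (mk_mem_prod (left_mem_Icc.2 zero_le_one) hy)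
    (mk_mem_prod (right_mem_Icc.2 zero_le_one) hy) (sub_nonneg.2 hx.2) hx.1 (sub_add_cancel 1 x)
  rwa [Prod.smul_mk, Prod.smul_mk, Prod.mk_add_mk, Convex.combo_self (sub_add_cancel 1 x),
    smul_zero, zero_add, smul_eq_mul, mul_one] at key

theorem integral_le_chord_of_convexOn_prod {F : Type*} [AddCommGroup F] [Module ℝ F]
    [MeasurableSpace F] {t : Set F} {G : ℝ × F → ℝ} (hG : ConvexOn ℝ (Icc 0 1 ×ˢ t) G)
    {ρ : Measure F} (hρ : ∀ᵐ y ∂ρ, y ∈ t) (hint : ∀ x, Integrable (fun y ↦ G (x, y)) ρ)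
    {x : ℝ} (hx : x ∈ Icc (0 : ℝ) 1) :
    ∫ y, G (x, y) ∂ρ ≤ (1 - x) * ∫ y, G (0, y) ∂ρ + x * ∫ y, G (1, y) ∂ρ := by
  rw [← integral_const_mul, ← integral_const_mul, ← integral_add]
  · exact integral_mono_ae (hint x) (((hint 0).const_mul _).add ((hint 1).const_mul _)) <|
      hρ.mono fun y hy ↦ hG.le_chord_fst hy hx
  · exact (hint 0).const_mul _
  · exact (hint 1).const_mul _

theorem integral_pi_le_integral_pi_bernoulliMeasure_of_stronglyMeasurable :
    ∀ {n : ℕ} (μ : Fin n → Measure ℝ) [∀ i, IsProbabilityMeasure (μ i)],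
      (∀ i, ∀ᵐ x ∂μ i, x ∈ Icc (0 : ℝ) 1) →
      ∀ {g : (Fin n → ℝ) → ℝ} {C : ℝ}, StronglyMeasurable g → (∀ x, ‖g x‖ ≤ C) →
      ConvexOn ℝ (Icc 0 1) g →
      ∫ x, g x ∂Measure.pi μ ≤ ∫ x, g x ∂Measure.pi fun i ↦ bernoulliMeasure (∫ t, t ∂μ i)
  | 0, _, _, _, _, _, _, _, _ => by
    rw [Measure.pi_of_empty, Measure.pi_of_empty]
  | n + 1, μ, _, hμ, g, C, hg, hC, hconv => by
    set ρ := Measure.pi fun j : Fin n ↦ μ j.succ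
    set ρ' := Measure.pi fun j : Fin n ↦ bernoulliMeasure (∫ t, t ∂μ j.succ)
    obtain ⟨hp₀, hp₁⟩ := integral_id_mem_Icc (hμ 0)
    set p := ∫ t, t ∂μ 0
    set G : ℝ × (Fin n → ℝ) → ℝ := fun z ↦ g (Fin.cons z.1 z.2)
    have hGm : StronglyMeasurable G :=
      hg.comp_measurable (Fin.consEquivL ℝ fun _ ↦ ℝ).continuous.measurable
    have hGint : ∀ (ν : Measure (ℝ × (Fin n → ℝ))) [IsFiniteMeasure ν], Integrable G ν :=
      fun ν _ ↦ .of_bound hGm.aestronglyMeasurable C (ae_of_all _ fun _ ↦ hC _)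
    have hsec : ∀ x, StronglyMeasurable fun y ↦ G (x, y) :=
      fun x ↦ hGm.comp_measurable measurable_prodMk_left
    have hsecint : ∀ x, Integrable (fun y ↦ G (x, y)) ρ :=
      fun x ↦ .of_bound (hsec x).aestronglyMeasurable C (ae_of_all _ fun _ ↦ hC _)
    have hGconv := hconv.comp_fin_cons
    have hind : ∀ x ∈ Icc (0 : ℝ) 1, ∫ y, G (x, y) ∂ρ ≤ ∫ y, G (x, y) ∂ρ' := fun x hx ↦
      integral_pi_le_integral_pi_bernoulliMeasure_of_stronglyMeasurable (fun j ↦ μ j.succ)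
        (fun j ↦ hμ j.succ) (hsec x) (fun _ ↦ hC _) (hGconv.comp_prodMk_right hx)
    calc ∫ x, g x ∂Measure.pi μ = ∫ x, ∫ y, G (x, y) ∂ρ ∂μ 0 := by
          rw [integral_pi_fin_succ, integral_prod _ (hGint _)]
      _ ≤ (1 - p) * ∫ y, G (0, y) ∂ρ + p * ∫ y, G (1, y) ∂ρ :=
          integral_le_of_le_chord (hμ 0) (hGint _).integral_prod_left fun x hx ↦
            integral_le_chord_of_convexOn_prod hGconv (ae_mem_Icc_pi (fun j ↦ hμ j.succ))
              hsecint hx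
      _ ≤ (1 - p) * ∫ y, G (0, y) ∂ρ' + p * ∫ y, G (1, y) ∂ρ' :=
          add_le_add
            (mul_le_mul_of_nonneg_left (hind 0 (left_mem_Icc.2 zero_le_one)) (sub_nonneg.2 hp₁))
            (mul_le_mul_of_nonneg_left (hind 1 (right_mem_Icc.2 zero_le_one)) hp₀)
      _ = ∫ x, ∫ y, G (x, y) ∂ρ' ∂bernoulliMeasure p :=
          (integral_bernoulliMeasure hp₀ hp₁ fun x ↦ ∫ y, G (x, y) ∂ρ').symm
      _ = ∫ x, g x ∂Measure.pi fun i ↦ bernoulliMeasure (∫ t, t ∂μ i) := by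
          rw [integral_pi_fin_succ, integral_prod _ (hGint _)]

theorem integral_pi_le_integral_pi_bernoulliMeasure {n : ℕ} (μ : Fin n → Measure ℝ)
    [∀ i, IsProbabilityMeasure (μ i)] (hμ : ∀ i, ∀ᵐ x ∂μ i, x ∈ Icc (0 : ℝ) 1)
    {f : (Fin n → ℝ) → ℝ} (hconv : ConvexOn ℝ (Icc 0 1) f) (hcont : ContinuousOn f (Icc 0 1)) :
    ∫ x, f x ∂Measure.pi μ ≤ ∫ x, f x ∂Measure.pi fun i ↦ bernoulliMeasure (∫ t, t ∂μ i) := by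
  classical
  obtain ⟨C, hC⟩ := isCompact_Icc.exists_bound_of_continuousOn hcont
  have hC₀ : 0 ≤ C := (norm_nonneg _).trans (hC 0 (left_mem_Icc.2 zero_le_one))
  set g := (Icc 0 1).indicator f
  have hg : StronglyMeasurable g := by
    rw [show g = _ from piecewise_eq_indicator.symm]
    exact (hcont.measurable_piecewise continuousOn_const measurableSet_Icc).stronglyMeasurable
  have hgC : ∀ x, ‖g x‖ ≤ C := fun x ↦ by
    rw [norm_indicator_eq_indicator_norm]
    exact indicator_le' (fun x hx ↦ hC x hx) (fun _ _ ↦ hC₀) x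
  have hfg : ∀ ν : Measure (Fin n → ℝ), (∀ᵐ x ∂ν, x ∈ Icc 0 1) →
      ∫ x, f x ∂ν = ∫ x, g x ∂ν := fun ν hν ↦
    integral_congr_ae <| hν.mono fun x hx ↦ (indicator_of_mem hx f).symm
  rw [hfg _ (ae_mem_Icc_pi hμ), hfg _ (ae_mem_Icc_pi fun _ ↦ ae_mem_Icc_bernoulliMeasure _)]
  exact integral_pi_le_integral_pi_bernoulliMeasure_of_stronglyMeasurable μ hμ hg hgC <|
    hconv.congr fun x hx ↦ (indicator_of_mem hx f).symm

/-- Maurer's comparison lemma: if `X = (X₁,…,X_m)` are i.i.d. with law `μ`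
supported in `[0,1]` and mean `μ₀`, and `X' = (X'₁,…,X'_m)` are i.i.d.
Bernoulli with mean `μ₀` (law `ν = μ₀·δ₁ + (1-μ₀)·δ₀`), then for every convex
function `f` on the cube `[0,1]^m`, `E[f(X)] ≤ E[f(X')]`. -/
theorem maurer_comparison (m : ℕ) (μ : Measure ℝ) [IsProbabilityMeasure μ]
    (hsupp : ∀ᵐ x ∂μ, x ∈ Set.Icc (0 : ℝ) 1)
    (μ₀ : ℝ) (hmean : ∫ x, x ∂μ = μ₀)
    (f : (Fin m → ℝ) → ℝ)
    (hconv : ConvexOn ℝ (Set.Icc (0 : Fin m → ℝ) 1) f)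
    (hcont : ContinuousOn f (Set.Icc (0 : Fin m → ℝ) 1)) :
    (∫ x, f x ∂(Measure.pi fun _ : Fin m => μ))
      ≤ ∫ x, f x ∂(Measure.pi fun _ : Fin m =>
          (ENNReal.ofReal μ₀ • Measure.dirac (1 : ℝ)
            + ENNReal.ofReal (1 - μ₀) • Measure.dirac (0 : ℝ))) := by
  have key := integral_pi_le_integral_pi_bernoulliMeasure (fun _ ↦ μ) (fun _ ↦ hsupp) hconv hcont
  rwa [hmean] at key
end

section
/- (Maurer's exponential moment bound, upper half) Let X₁,…,X_m be i.i.d. Bernoulli random variables with mean μ ∈ [0,1] and m ≥ 8. Then E[ exp( m · kl( (1/m)∑X_i ‖ μ ) ) ] ≤ 2√m, where kl(p‖q) = p ln(p/q) + (1−p) ln((1−p)/(1−q)) is the Bernoulli KL divergence. -/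
/-!
For `0 < μ < 1` the `k`-th summand equals `C(m,k) (k/m)^k (1 - k/m)^(m-k)`, independently of `μ`;
the terms `k = 0` and `k = m` equal `1`. Writing the factorials through the Stirling sequence
`s n = n! / (√(2n) (n/e)^n)`, which decreases to `√π`, the middle terms are at most
`s m / π · √(m/2) / √(k (m-k))`, and `∑ 1/√(k(m-k)) ≤ π` because each term is dominated by an
increment of `arcsin ((2x - m)/m)` over `[k - 1/2, k + 1/2]`. Hence the sum is at most
`2 + s m √(m/2)`, and `s m ≤ s 8 < 2√2 - 1` makes this at most `2√m` once `√(m/2) ≥ 2`.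
-/

open Real Finset Stirling

noncomputable def binaryKL (p q : ℝ) : ℝ :=
  p * log (p / q) + (1 - p) * log ((1 - p) / (1 - q))

def binomialWeight (m k : ℕ) (p : ℝ) : ℝ :=
  m.choose k * p ^ k * (1 - p) ^ (m - k)

lemma binomialWeight_nonneg (m k : ℕ) {p : ℝ} (hp0 : 0 ≤ p) (hp1 : p ≤ 1) :
    0 ≤ binomialWeight m k p := by
  unfold binomialWeight
  have hq : 0 ≤ 1 - p := sub_nonneg.2 hp1
  positivity

lemma pow_mul_exp_nat_mul_log_div {x q : ℝ} (hx : 0 ≤ x) (hq : 0 < q) {n : ℕ}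
    (hxn : x = 0 → n = 0) : q ^ n * exp (n * log (x / q)) = x ^ n := by
  rcases hx.eq_or_lt with rfl | hx
  · simp [hxn rfl]
  · rw [exp_nat_mul, exp_log (div_pos hx hq), ← mul_pow, mul_div_cancel₀ _ hq.ne']

lemma binomialWeight_mul_exp_binaryKL {m k : ℕ} (hkm : k ≤ m) {μ : ℝ} (hμ0 : 0 < μ)
    (hμ1 : μ < 1) :
    binomialWeight m k μ * exp (m * binaryKL (k / m) μ) = binomialWeight m k (k / m) := by
  rcases Nat.eq_zero_or_pos m with rfl | hm
  · obtain rfl : k = 0 := by omega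
    simp [binomialWeight]
  have hM : (m : ℝ) ≠ 0 := by positivity
  set p : ℝ := k / m with hp
  have hp1 : p ≤ 1 := div_le_one_of_le₀ (by exact_mod_cast hkm) (by positivity)
  have hexp : (m : ℝ) * binaryKL p μ
      = k * log (p / μ) + ((m - k : ℕ) : ℝ) * log ((1 - p) / (1 - μ)) := by
    simp only [binaryKL, hp]
    push_cast [hkm]
    field_simp
  have hk : p = 0 → k = 0 := fun h ↦ by
    simpa [hp, hM] using h
  have hmk : 1 - p = 0 → m - k = 0 := fun h ↦ by
    rw [sub_eq_zero, eq_comm, hp, div_eq_one_iff_eq hM] at h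
    exact Nat.sub_eq_zero_of_le (by exact_mod_cast h.ge)
  calc binomialWeight m k μ * exp (m * binaryKL p μ)
      = m.choose k * (μ ^ k * exp (k * log (p / μ)))
          * ((1 - μ) ^ (m - k) * exp (((m - k : ℕ) : ℝ) * log ((1 - p) / (1 - μ)))) := by
        rw [hexp, exp_add, binomialWeight]; ring
    _ = binomialWeight m k p := by
        rw [pow_mul_exp_nat_mul_log_div (by positivity) hμ0 hk,
          pow_mul_exp_nat_mul_log_div (sub_nonneg.2 hp1) (sub_pos.2 hμ1) hmk, binomialWeight,
          mul_assoc]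

-- At `μ ∈ {0, 1}` Lean's `log 0 = 0` stands in for `kl = +∞`, but only in terms of weight zero.
lemma binomialWeight_mul_exp_binaryKL_le {m k : ℕ} (hkm : k ≤ m) {μ : ℝ} (hμ0 : 0 ≤ μ)
    (hμ1 : μ ≤ 1) :
    binomialWeight m k μ * exp (m * binaryKL (k / m) μ) ≤ binomialWeight m k (k / m) := by
  have hw := binomialWeight_nonneg m k (p := k / m) (by positivity)
    (div_le_one_of_le₀ (by exact_mod_cast hkm) (by positivity))
  rcases hμ0.eq_or_lt with rfl | hμ0
  · rcases k.eq_zero_or_pos with rfl | hk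
    · simp [binomialWeight, binaryKL]
    · simpa [binomialWeight, zero_pow hk.ne'] using hw
  rcases hμ1.eq_or_lt with rfl | hμ1
  · rcases hkm.eq_or_lt with rfl | hk
    · rcases k.eq_zero_or_pos with rfl | hk
      · simp [binomialWeight, binaryKL]
      · simp [binomialWeight, binaryKL, hk.ne']
    · simpa [binomialWeight, zero_pow (Nat.sub_ne_zero_of_lt hk)] using hw
  exact (binomialWeight_mul_exp_binaryKL hkm hμ0 hμ1).le

lemma stirlingSeq_nonneg (n : ℕ) : 0 ≤ stirlingSeq n := by
  unfold stirlingSeq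
  positivity

lemma stirlingSeq_le_of_le {n m : ℕ} (hn : n ≠ 0) (h : n ≤ m) : stirlingSeq m ≤ stirlingSeq n := by
  obtain ⟨n, rfl⟩ := Nat.exists_eq_succ_of_ne_zero hn
  obtain ⟨m, rfl⟩ := Nat.exists_eq_succ_of_ne_zero (by omega : m ≠ 0)
  exact stirlingSeq'_antitone (Nat.succ_le_succ_iff.1 h)

lemma stirlingSeq_eight_le : stirlingSeq 8 ≤ 2 * √2 - 1 := by
  have h8 : stirlingSeq 8 = 40320 * exp 1 ^ 8 / (4 * 8 ^ 8) := by
    rw [stirlingSeq, show (2 * (8 : ℕ) : ℝ) = 4 ^ 2 by norm_num, sqrt_sq (by norm_num), div_pow]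
    simp only [Nat.factorial, Nat.cast_ofNat]
    field_simp
    norm_num
  have he : exp 1 ^ 8 ≤ 2.7182818286 ^ 8 := by
    gcongr
    exact exp_one_lt_d9.le
  have hs2 : (1.414213 : ℝ) ≤ √2 := by
    rw [le_sqrt (by norm_num) (by norm_num)]
    norm_num
  rw [h8]
  linarith

lemma binomialWeight_self_div_eq {m k : ℕ} (hk : 0 < k) (hkm : k < m) :
    binomialWeight m k (k / m) =
      stirlingSeq m / (stirlingSeq k * stirlingSeq (m - k)) * √(m / (2 * k * (m - k))) := by
  obtain ⟨n, rfl⟩ := Nat.exists_eq_add_of_le hkm.le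
  have hn : 0 < n := by omega
  have hK : (0 : ℝ) < k := by exact_mod_cast hk
  have hN : (0 : ℝ) < n := by exact_mod_cast hn
  have hsqrt : √((k + n : ℕ) / (2 * k * ((k + n : ℕ) - k)) : ℝ)
      = √(2 * (k + n : ℕ)) / (√(2 * k) * √(2 * n)) := by
    rw [← sqrt_mul (by positivity), ← sqrt_div' _ (by positivity)]
    congr 1
    push_cast
    rw [add_sub_cancel_left]
    field_simp
  rw [hsqrt, binomialWeight, Nat.cast_choose ℝ hkm.le, Nat.add_sub_cancel_left]
  simp only [stirlingSeq]
  have hcompl : 1 - (k : ℝ) / (k + n : ℕ) = n / (k + n : ℕ) := by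
    push_cast; field_simp; ring
  rw [hcompl]
  have hk2 : √(2 * (k : ℝ)) ≠ 0 := by positivity
  have hn2 : √(2 * (n : ℝ)) ≠ 0 := by positivity
  have hkn2 : √(2 * ((k + n : ℕ) : ℝ)) ≠ 0 := by positivity
  simp only [div_pow, pow_add]
  field_simp

lemma binomialWeight_self_div_le {m k : ℕ} (hk : 0 < k) (hkm : k < m) :
    binomialWeight m k (k / m) ≤ stirlingSeq m / π * √(m / 2) * (√(k * (m - k)))⁻¹ := by
  have hpi : π ≤ stirlingSeq k * stirlingSeq (m - k) := by
    rw [← mul_self_sqrt pi_pos.le]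
    exact mul_le_mul (sqrt_pi_le_stirlingSeq hk.ne')
      (sqrt_pi_le_stirlingSeq (Nat.sub_pos_of_lt hkm).ne') (sqrt_nonneg π) (stirlingSeq_nonneg k)
  have hsqrt : √(m / (2 * k * (m - k)) : ℝ) = √(m / 2) * (√(k * (m - k)))⁻¹ := by
    rw [← sqrt_inv, ← sqrt_mul (by positivity)]
    congr 1
    field_simp
  rw [binomialWeight_self_div_eq hk hkm, hsqrt, ← mul_assoc]
  have hs := stirlingSeq_nonneg m
  gcongr

lemma cos_le_sqrt_one_sub_sq_sin_mul_cos {x : ℝ} (hx : 0 ≤ cos x) (y : ℝ) :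
    cos x ≤ √(1 - (sin x * cos y) ^ 2) := by
  rw [← sqrt_sq hx]
  apply sqrt_le_sqrt
  nlinarith [cos_sq' x, cos_sq_le_one y, sq_nonneg (sin x)]

-- Midpoint rule for the convex derivative `(1 - x²)^(-1/2)` of `arcsin`, via sum-to-product.
lemma sub_le_arcsin_sub_arcsin_mul {a b : ℝ} (ha : -1 ≤ a) (hab : a ≤ b) (hb : b ≤ 1) :
    b - a ≤ (arcsin b - arcsin a) * √(1 - ((a + b) / 2) ^ 2) := by
  set d := (arcsin b - arcsin a) / 2
  set s := (arcsin b + arcsin a) / 2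
  have hd : 0 ≤ d := by
    have hmono := monotone_arcsin hab
    simp only [d]; linarith
  have hcos : 0 ≤ cos s := by
    apply cos_nonneg_of_mem_Icc
    constructor <;>
    · simp only [s]
      linarith [neg_pi_div_two_le_arcsin a, neg_pi_div_two_le_arcsin b,
        arcsin_le_pi_div_two a, arcsin_le_pi_div_two b]
  have hsin_b : sin (arcsin b) = b := sin_arcsin (by linarith) hb
  have hsin_a : sin (arcsin a) = a := sin_arcsin ha (by linarith)
  have hdiff : b - a = 2 * sin d * cos s := by
    rw [← hsin_b, ← hsin_a, sin_sub_sin]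
  have hmid : (a + b) / 2 = sin s * cos d := by
    rw [← hsin_b, ← hsin_a, add_comm, sin_add_sin]
    ring
  calc b - a = 2 * sin d * cos s := hdiff
    _ ≤ 2 * d * √(1 - ((a + b) / 2) ^ 2) := by
        rw [hmid]
        have hcos_le := cos_le_sqrt_one_sub_sq_sin_mul_cos hcos d
        have hsin_le := sin_le hd
        have hsin_nonneg := sin_nonneg_of_nonneg_of_le_pi hd (by
          simp only [d]
          linarith [neg_pi_div_two_le_arcsin a, arcsin_le_pi_div_two b, pi_pos])
        gcongr
    _ = (arcsin b - arcsin a) * √(1 - ((a + b) / 2) ^ 2) := by ring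

lemma inv_sqrt_mul_sub_le_arcsin_sub_arcsin {m k : ℕ} (hk : 0 < k) (hkm : k < m) :
    (√(k * (m - k)))⁻¹ ≤ arcsin ((2 * k + 1 - m) / m) - arcsin ((2 * k - 1 - m) / m) := by
  have hK : (1 : ℝ) ≤ k := by exact_mod_cast hk
  have hKM : (k : ℝ) + 1 ≤ m := by exact_mod_cast hkm
  have hM : (0 : ℝ) < m := by linarith
  have key := sub_le_arcsin_sub_arcsin_mul (a := (2 * k - 1 - m) / m) (b := (2 * k + 1 - m) / m)
    (by rw [le_div_iff₀ hM]; linarith) (by gcongr; linarith) (by rw [div_le_iff₀ hM]; linarith)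
  have hwidth : (2 * k + 1 - m : ℝ) / m - (2 * k - 1 - m) / m = 2 / m := by ring
  have hmid : √(1 - (((2 * k - 1 - m) / m + (2 * k + 1 - m) / m) / 2) ^ 2)
      = 2 / m * √(k * (m - k)) := by
    rw [← sqrt_sq (by positivity : (0 : ℝ) ≤ 2 / m), ← sqrt_mul (by positivity)]
    congr 1
    field_simp
    ring
  rw [hwidth, hmid] at key
  have hpos : 0 < √(k * (m - k) : ℝ) := sqrt_pos.2 (by nlinarith)
  rw [inv_le_iff_one_le_mul₀ hpos]
  refine le_of_mul_le_mul_left ?_ (by positivity : (0 : ℝ) < 2 / m)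
  linarith

lemma sum_inv_sqrt_mul_sub_le_pi (m : ℕ) : ∑ k ∈ Ico 1 m, (√(k * (m - k) : ℝ))⁻¹ ≤ π := by
  rcases Nat.eq_zero_or_pos m with rfl | hm
  · simp [pi_pos.le]
  set g : ℕ → ℝ := fun i ↦ arcsin ((2 * i - 1 - m) / m)
  calc ∑ k ∈ Ico 1 m, (√(k * (m - k) : ℝ))⁻¹ ≤ ∑ k ∈ Ico 1 m, (g (k + 1) - g k) := by
        refine sum_le_sum fun k hk ↦ ?_
        rw [mem_Ico] at hk
        refine (inv_sqrt_mul_sub_le_arcsin_sub_arcsin hk.1 hk.2).trans_eq ?_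
        simp only [g]
        push_cast
        ring_nf
    _ = g m - g 1 := sum_Ico_sub g hm
    _ ≤ π / 2 - -(π / 2) := sub_le_sub (arcsin_le_pi_div_two _) (neg_pi_div_two_le_arcsin _)
    _ = π := by ring

lemma sum_binomialWeight_self_div_le {m : ℕ} (hm : 0 < m) :
    ∑ k ∈ range (m + 1), binomialWeight m k (k / m) ≤ 2 + stirlingSeq m * √(m / 2) := by
  have hends : binomialWeight m 0 (0 / m) = 1 ∧ binomialWeight m m (m / m) = 1 := by
    simp [binomialWeight, hm.ne']
  calc ∑ k ∈ range (m + 1), binomialWeight m k (k / m)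
      = 2 + ∑ k ∈ Ico 1 m, binomialWeight m k (k / m) := by
        rw [sum_range_succ, range_eq_Ico, sum_eq_sum_Ico_succ_bot hm]
        push_cast
        rw [hends.1, hends.2]
        ring
    _ ≤ 2 + ∑ k ∈ Ico 1 m, stirlingSeq m / π * √(m / 2) * (√(k * (m - k)))⁻¹ := by
        gcongr with k hk
        exact binomialWeight_self_div_le (mem_Ico.1 hk).1 (mem_Ico.1 hk).2
    _ ≤ 2 + stirlingSeq m / π * √(m / 2) * π := by
        rw [← mul_sum]
        have hs := stirlingSeq_nonneg m
        grw [sum_inv_sqrt_mul_sub_le_pi m]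
    _ = 2 + stirlingSeq m * √(m / 2) := by
        field_simp

lemma two_add_stirlingSeq_mul_sqrt_le {m : ℕ} (hm : 8 ≤ m) :
    2 + stirlingSeq m * √(m / 2) ≤ 2 * √m := by
  have hs : stirlingSeq m ≤ 2 * √2 - 1 :=
    (stirlingSeq_le_of_le (by norm_num) hm).trans stirlingSeq_eight_le
  have hroot : √2 * √(m / 2) = √m := by
    rw [← sqrt_mul zero_le_two]
    field_simp
  have htwo : 2 ≤ √(m / 2) := by
    rw [le_sqrt zero_le_two (by positivity)]
    have hm' : (8 : ℝ) ≤ m := by exact_mod_cast hm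
    linarith
  calc 2 + stirlingSeq m * √(m / 2) ≤ 2 + (2 * √2 - 1) * √(m / 2) := by gcongr
    _ = 2 * √m + (2 - √(m / 2)) := by rw [← hroot]; ring
    _ ≤ 2 * √m := by linarith

/-- Maurer's exponential moment bound (upper half): for `X₁,…,X_m` i.i.d.
Bernoulli(μ) with `m ≥ 8`, `E[exp(m·kl((1/m)∑Xᵢ ‖ μ))] ≤ 2√m`, written out as
a sum over the binomial distribution, with
`kl(p‖q) = p ln(p/q) + (1-p) ln((1-p)/(1-q))`. -/
theorem maurer_exp_moment_bound (m : ℕ) (hm : 8 ≤ m) (μ : ℝ)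
    (hμ0 : 0 ≤ μ) (hμ1 : μ ≤ 1) :
    ∑ k ∈ Finset.range (m + 1),
      (m.choose k : ℝ) * μ ^ k * (1 - μ) ^ (m - k) *
        Real.exp (m * ((k / m : ℝ) * Real.log ((k / m : ℝ) / μ)
          + (1 - (k / m : ℝ)) * Real.log ((1 - (k / m : ℝ)) / (1 - μ))))
      ≤ 2 * Real.sqrt m := by
  calc _ ≤ ∑ k ∈ range (m + 1), binomialWeight m k (k / m) :=
        sum_le_sum fun k hk ↦
          binomialWeight_mul_exp_binaryKL_le (Nat.lt_succ_iff.1 (mem_range.1 hk)) hμ0 hμ1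
    _ ≤ 2 + stirlingSeq m * √(m / 2) := sum_binomialWeight_self_div_le (by omega)
    _ ≤ 2 * √m := two_add_stirlingSeq_mul_sqrt_le hm
end
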